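/- arXiv:2307.16830 — 2 statements merged into one kernel-verified Lean document; each statement's English description precedes it below -/
import Mathlib

section
/- Let M_aug be the symmetric block matrix [[W + Σ_x + δ_w I, 0, Aᵀ], [0, Σ_s + δ_w I, -I], [A, -I, -δ_c I]] with W symmetric n×n, A an m×n matrix, Σ_x, Σ_s positive definite diagonal, δ_w ≥ 0, δ_c > 0. If the condensed matrix M_cond := W + δ_w I + Σ_x + Aᵀ D A is positive definite, where C := (δ_c Σ_s + (1+δ_c δ_w) I)^{-1} and D := (Σ_s + δ_w I) C, then M_aug is invertible. -/
open Matrix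

/-- If the condensed KKT matrix `M_cond = W + δ_w I + Σₓ + Aᵀ D A` is positive definite,
then the augmented KKT matrix
`M_aug = [[W + Σₓ + δ_w I, 0, Aᵀ], [0, Σₛ + δ_w I, -I], [A, -I, -δ_c I]]` is invertible. -/
theorem stmt1 {n m : ℕ} (W : Matrix (Fin n) (Fin n) ℝ) (hW : W.IsSymm)
    (A : Matrix (Fin m) (Fin n) ℝ)
    (σx : Fin n → ℝ) (hσx : ∀ i, 0 < σx i)
    (σs : Fin m → ℝ) (hσs : ∀ j, 0 < σs j)
    (δw δc : ℝ) (hδw : 0 ≤ δw) (hδc : 0 < δc)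
    (C : Matrix (Fin m) (Fin m) ℝ)
    (hC : C = (δc • Matrix.diagonal σs + (1 + δc * δw) • (1 : Matrix (Fin m) (Fin m) ℝ))⁻¹)
    (D : Matrix (Fin m) (Fin m) ℝ)
    (hD : D = (Matrix.diagonal σs + δw • (1 : Matrix (Fin m) (Fin m) ℝ)) * C)
    (hcond : (W + δw • (1 : Matrix (Fin n) (Fin n) ℝ) + Matrix.diagonal σx + Aᵀ * D * A).PosDef) :
    IsUnit
      (Matrix.fromBlocks
        (W + Matrix.diagonal σx + δw • (1 : Matrix (Fin n) (Fin n) ℝ))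
        (Matrix.fromCols (0 : Matrix (Fin n) (Fin m) ℝ) Aᵀ)
        (Matrix.fromRows (0 : Matrix (Fin m) (Fin n) ℝ) A)
        (Matrix.fromBlocks
          (Matrix.diagonal σs + δw • (1 : Matrix (Fin m) (Fin m) ℝ))
          (-(1 : Matrix (Fin m) (Fin m) ℝ))
          (-(1 : Matrix (Fin m) (Fin m) ℝ))
          (-(δc • (1 : Matrix (Fin m) (Fin m) ℝ))))) := by
  -- E := δc • diagonal σs + (1 + δc δw) • 1 is a diagonal matrix with positive entries
  set E : Matrix (Fin m) (Fin m) ℝ :=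
    δc • Matrix.diagonal σs + (1 + δc * δw) • (1 : Matrix (Fin m) (Fin m) ℝ) with hE
  have hEdiag : E = Matrix.diagonal (fun j => δc * σs j + (1 + δc * δw)) := by
    rw [hE]
    ext i j
    by_cases h : i = j <;>
      simp [Matrix.diagonal, Matrix.one_apply, h, mul_comm]
  have hdpos : ∀ j, 0 < δc * σs j + (1 + δc * δw) := by
    intro j
    have := mul_pos hδc (hσs j)
    nlinarith [mul_nonneg hδc.le hδw]
  have hEdet : IsUnit E.det := by
    rw [hEdiag, Matrix.det_diagonal]
    exact (Finset.prod_pos (fun j _ => hdpos j)).ne'.isUnit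
  have hCE : C * E = 1 := by rw [hC]; exact Matrix.nonsing_inv_mul E hEdet
  rw [Matrix.isUnit_iff_isUnit_det, isUnit_iff_ne_zero]
  intro hdet
  obtain ⟨v, hv0, hv⟩ := Matrix.exists_mulVec_eq_zero_iff.mpr hdet
  set x : Fin n → ℝ := fun i => v (Sum.inl i) with hx
  set s : Fin m → ℝ := fun j => v (Sum.inr (Sum.inl j)) with hs
  set y : Fin m → ℝ := fun j => v (Sum.inr (Sum.inr j)) with hy
  have hvdecomp : v = Sum.elim x (Sum.elim s y) := by
    funext i; rcases i with i | j | k <;> rfl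
  rw [hvdecomp, Matrix.fromBlocks_mulVec] at hv
  have eq1 : (W + Matrix.diagonal σx + δw • (1 : Matrix (Fin n) (Fin n) ℝ)) *ᵥ x
      + (Matrix.fromCols (0 : Matrix (Fin n) (Fin m) ℝ) Aᵀ) *ᵥ Sum.elim s y = 0 := by
    funext i; exact congrFun hv (Sum.inl i)
  have eq2 : (Matrix.fromRows (0 : Matrix (Fin m) (Fin n) ℝ) A) *ᵥ x
      + (Matrix.fromBlocks
          (Matrix.diagonal σs + δw • (1 : Matrix (Fin m) (Fin m) ℝ))
          (-(1 : Matrix (Fin m) (Fin m) ℝ))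
          (-(1 : Matrix (Fin m) (Fin m) ℝ))
          (-(δc • (1 : Matrix (Fin m) (Fin m) ℝ)))) *ᵥ Sum.elim s y = 0 := by
    funext i; exact congrFun hv (Sum.inr i)
  rw [Matrix.fromCols_mulVec_sumElim] at eq1
  rw [Matrix.fromRows_mulVec, Matrix.fromBlocks_mulVec] at eq2
  simp only [Sum.elim_comp_inl, Sum.elim_comp_inr] at eq2
  have eq2a : (Matrix.diagonal σs + δw • (1 : Matrix (Fin m) (Fin m) ℝ)) *ᵥ s = y := by
    have h : (0 : Matrix (Fin m) (Fin n) ℝ) *ᵥ x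
        + ((Matrix.diagonal σs + δw • (1 : Matrix (Fin m) (Fin m) ℝ)) *ᵥ s
          + (-(1 : Matrix (Fin m) (Fin m) ℝ)) *ᵥ y) = 0 := by
      funext j; exact congrFun eq2 (Sum.inl j)
    simp only [Matrix.zero_mulVec, zero_add, Matrix.neg_mulVec, Matrix.one_mulVec,
      add_neg_eq_zero] at h
    exact h
  have eq2b : A *ᵥ x = E *ᵥ s := by
    have h : A *ᵥ x
        + ((-(1 : Matrix (Fin m) (Fin m) ℝ)) *ᵥ s
          + (-(δc • (1 : Matrix (Fin m) (Fin m) ℝ))) *ᵥ y) = 0 := by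
      funext j; exact congrFun eq2 (Sum.inr j)
    have hy' : E *ᵥ s = s + δc • y := by
      rw [← eq2a, hE]
      simp [Matrix.add_mulVec, Matrix.smul_mulVec, add_smul, smul_smul]
      module
    rw [hy']
    simp [Matrix.neg_mulVec, Matrix.smul_mulVec] at h
    linear_combination (norm := module) h
  have hsC : s = C *ᵥ (A *ᵥ x) := by
    rw [eq2b, Matrix.mulVec_mulVec, hCE, Matrix.one_mulVec]
  have hyD : y = D *ᵥ (A *ᵥ x) := by
    rw [← eq2a, hsC, hD, Matrix.mulVec_mulVec]
  have eq1' : (W + δw • (1 : Matrix (Fin n) (Fin n) ℝ) + Matrix.diagonal σx + Aᵀ * D * A) *ᵥ x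
      = 0 := by
    have : (W + Matrix.diagonal σx + δw • (1 : Matrix (Fin n) (Fin n) ℝ)) *ᵥ x
        + Aᵀ *ᵥ y = 0 := by simpa using eq1
    rw [hyD] at this
    simp only [Matrix.add_mulVec, Matrix.mulVec_mulVec, Matrix.mul_assoc] at this ⊢
    linear_combination (norm := module) this
  have hx0 : x = 0 := by
    by_contra hxne
    have := (Matrix.posDef_iff_dotProduct_mulVec.mp hcond).2 (x := x) (by simpa using hxne)
    rw [show ((W + δw • (1 : Matrix (Fin n) (Fin n) ℝ) + Matrix.diagonal σx + Aᵀ * D * A) *ᵥ x) = 0 from eq1'] at this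
    simp at this
  have hs0 : s = 0 := by
    rw [hsC, hx0]
    simp
  have hy0 : y = 0 := by rw [← eq2a, hs0]; simp
  apply hv0
  rw [hvdecomp, hx0, hs0, hy0]
  simp
end

section
/- Let M_aug = [[H₁, 0, Aᵀ],[0, H₂, −I],[A, −I, −δ_c I]] with H₁ = W + Σ_x + δ_w I symmetric n×n, H₂ = Σ_s + δ_w I diagonal positive definite m×m, and δ_c > 0. If M_cond = H₁ + AᵀDA is positive definite (with C, D as defined by C = (δ_c Σ_s + (1+δ_c δ_w)I)^{-1}, D = H₂C), then M_aug has exactly n + m positive eigenvalues, m negative eigenvalues, and no zero eigenvalues, i.e., inertia(M_aug) = (n+m, 0, m). -/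
open Matrix Finset Module RealInnerProductSpace

lemma inertia_key {ι : Type*} [Fintype ι] [DecidableEq ι]
    (M : Matrix ι ι ℝ) (hM : M.IsHermitian) (ε : ℝ)
    (U : Submodule ℝ (EuclideanSpace ℝ ι))
    (hU : ∀ x ∈ U, x ≠ 0 → 0 < ε * ((x : ι → ℝ) ⬝ᵥ (M *ᵥ (x : ι → ℝ)))) :
    Module.finrank ℝ U ≤ (Finset.univ.filter fun j => 0 < ε * hM.eigenvalues j).card := by
  classical
  set b := hM.eigenvectorBasis with hb
  set μ := hM.eigenvalues with hμ
  have hq : ∀ x : EuclideanSpace ℝ ι,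
      (x : ι → ℝ) ⬝ᵥ (M *ᵥ (x : ι → ℝ)) = ∑ j, μ j * (b.repr x j) ^ 2 := by
    intro x
    have hx : x = ∑ j, b.repr x j • b j := (b.sum_repr x).symm
    have hMx : M *ᵥ (x : ι → ℝ) = ∑ j, (μ j * b.repr x j) • (b j : EuclideanSpace ℝ ι) := by
      conv_lhs => rw [hx]
      rw [WithLp.ofLp_sum, WithLp.ofLp_sum, show (M *ᵥ (∑ j, (b.repr x j • b j).ofLp))
          = M.mulVecLin (∑ j, (b.repr x j • b j).ofLp) from rfl, map_sum]
      refine Finset.sum_congr rfl fun j _ => ?_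
      rw [WithLp.ofLp_smul, WithLp.ofLp_smul]
      show M *ᵥ (b.repr x j • (b j).ofLp) = _
      rw [Matrix.mulVec_smul, hM.mulVec_eigenvectorBasis, smul_smul, mul_comm]
    have h1 : (x : ι → ℝ) ⬝ᵥ (M *ᵥ (x : ι → ℝ))
        = ⟪x, WithLp.toLp 2 (M *ᵥ (x : ι → ℝ))⟫ := by
      simp [PiLp.inner_apply, dotProduct, RCLike.inner_apply, mul_comm]
    rw [h1, show WithLp.toLp 2 (M *ᵥ (x : ι → ℝ))
        = ∑ j, (μ j * b.repr x j) • (b j : EuclideanSpace ℝ ι) from by rw [hMx], inner_sum]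
    refine Finset.sum_congr rfl fun j _ => ?_
    rw [real_inner_smul_right, real_inner_comm, ← b.repr_apply_apply, sq]
    ring
  -- the span of eigenvectors with `ε * μ j ≤ 0`
  set W : Submodule ℝ (EuclideanSpace ℝ ι) :=
    Submodule.span ℝ (Set.range fun j : {j : ι // ¬ 0 < ε * μ j} => (b j : EuclideanSpace ℝ ι))
    with hW
  have hrepr0 : ∀ x ∈ W, ∀ j : ι, (0 < ε * μ j) → b.repr x j = 0 := by
    intro x hx j hj
    rw [hW] at hx
    induction hx using Submodule.span_induction with
    | mem y hy =>
        obtain ⟨⟨i, hi⟩, rfl⟩ := hy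
        have h := congrFun (congrArg (fun v : EuclideanSpace ℝ ι => v.ofLp) (b.repr_self i)) j
        simp only [EuclideanSpace.single_apply] at h
        rw [h, if_neg]
        rintro rfl; exact hi hj
    | zero => simp
    | add y z _ _ hy hz => rw [map_add]; simp [hy, hz]
    | smul a y _ hy => rw [_root_.map_smul]; simp [hy]
  have hWneg : ∀ x ∈ W, ε * ((x : ι → ℝ) ⬝ᵥ (M *ᵥ (x : ι → ℝ))) ≤ 0 := by
    intro x hx
    rw [hq x, Finset.mul_sum]
    refine Finset.sum_nonpos fun j _ => ?_
    by_cases hj : 0 < ε * μ j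
    · rw [hrepr0 x hx j hj]; ring_nf; simp
    · push_neg at hj
      have : ε * (μ j * b.repr x j ^ 2) = (ε * μ j) * b.repr x j ^ 2 := by ring
      rw [this]
      exact mul_nonpos_of_nonpos_of_nonneg hj (sq_nonneg _)
  -- finrank of W
  have hWrank : Module.finrank ℝ W
      = (Finset.univ.filter fun j : ι => ¬ 0 < ε * μ j).card := by
    rw [hW, finrank_span_eq_card]
    · simp [Fintype.card_subtype]
    · exact b.orthonormal.linearIndependent.comp _ Subtype.val_injective
  have hinter : U ⊓ W = ⊥ := by
    rw [Submodule.eq_bot_iff]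
    rintro x ⟨hxU, hxW⟩
    by_contra hx0
    exact absurd (hWneg x hxW) (not_le.2 (hU x hxU hx0))
  have hsum := Submodule.finrank_sup_add_finrank_inf_eq U W
  rw [hinter, finrank_bot] at hsum
  have h1 : Module.finrank ℝ ↥(U ⊔ W) ≤ Fintype.card ι := by
    simpa [finrank_euclideanSpace] using Submodule.finrank_le (U ⊔ W)
  have h2 := Finset.card_filter_add_card_filter_not (s := (univ : Finset ι))
    (p := fun j => 0 < ε * μ j)
  simp only [Finset.card_univ] at h2
  omega

lemma quad_plus {n m : ℕ} (H₁ : Matrix (Fin n) (Fin n) ℝ) (A : Matrix (Fin m) (Fin n) ℝ)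
    (h : Fin m → ℝ) (δc : ℝ) (e : Fin m → ℝ) (he : ∀ j, e j = δc * h j + 1)
    (he0 : ∀ j, e j ≠ 0) (x : Fin n → ℝ) (s : Fin m → ℝ) :
    (Sum.elim x (Sum.elim (diagonal (fun j => (e j)⁻¹) *ᵥ (A *ᵥ x) + s)
        (diagonal (fun j => h j * (e j)⁻¹) *ᵥ (A *ᵥ x)))) ⬝ᵥ
      ((fromBlocks H₁ (fromCols 0 Aᵀ) (fromRows 0 A)
        (fromBlocks (diagonal h) (-1) (-1) (-(δc • (1 : Matrix (Fin m) (Fin m) ℝ))))) *ᵥ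
       (Sum.elim x (Sum.elim (diagonal (fun j => (e j)⁻¹) *ᵥ (A *ᵥ x) + s)
        (diagonal (fun j => h j * (e j)⁻¹) *ᵥ (A *ᵥ x)))))
    = x ⬝ᵥ ((H₁ + Aᵀ * diagonal (fun j => h j * (e j)⁻¹) * A) *ᵥ x)
      + s ⬝ᵥ (diagonal h *ᵥ s) := by
  have key : ∀ v : Fin m → ℝ, x ⬝ᵥ (Aᵀ *ᵥ v) = (A *ᵥ x) ⬝ᵥ v := fun v => by
    rw [Matrix.dotProduct_mulVec, Matrix.vecMul_transpose]
  simp only [fromBlocks_mulVec, fromRows_mulVec, fromCols_mulVec_sumElim,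
    sumElim_dotProduct_sumElim, Matrix.add_mulVec, Matrix.zero_mulVec, zero_add, add_zero,
    Matrix.neg_mulVec, Matrix.one_mulVec, dotProduct_add, add_dotProduct,
    Matrix.smul_mulVec, dotProduct_neg, dotProduct_smul,
    Sum.elim_comp_inl, Sum.elim_comp_inr, dotProduct_zero, zero_dotProduct,
    ← Matrix.mulVec_mulVec, neg_mul, one_mul, key]
  set u := A *ᵥ x with hu'
  have hDu : diagonal (fun j => h j * (e j)⁻¹) *ᵥ u
      = diagonal h *ᵥ (diagonal (fun j => (e j)⁻¹) *ᵥ u) := by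
    conv_rhs => rw [Matrix.mulVec_mulVec, Matrix.diagonal_mul_diagonal]
  rw [hDu]
  set c := diagonal (fun j => (e j)⁻¹) *ᵥ u with hc
  have hu : u = c + δc • (diagonal h *ᵥ c) := by
    funext j
    have hne : (δc * h j + 1 : ℝ) ≠ 0 := by rw [← he j]; exact he0 j
    simp only [hc, Pi.add_apply, Pi.smul_apply, Matrix.mulVec_diagonal, smul_eq_mul]
    rw [he j]
    field_simp
    ring
  rw [hu]
  simp only [Matrix.mulVec_add, Matrix.mulVec_smul, dotProduct_add, add_dotProduct,
    dotProduct_smul, smul_dotProduct, smul_eq_mul, dotProduct_neg, neg_dotProduct]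
  have h1 : (diagonal h *ᵥ c) ⬝ᵥ c = c ⬝ᵥ (diagonal h *ᵥ c) := dotProduct_comm _ _
  have h2 : c ⬝ᵥ (diagonal h *ᵥ s) = (diagonal h *ᵥ c) ⬝ᵥ s := by
    rw [Matrix.dotProduct_mulVec]
    congr 1
    funext j
    simp [Matrix.vecMul_diagonal, Matrix.mulVec_diagonal, mul_comm]
  linear_combination h2

lemma quad_minus {n m : ℕ} (H₁ : Matrix (Fin n) (Fin n) ℝ) (A : Matrix (Fin m) (Fin n) ℝ)
    (h : Fin m → ℝ) (δc : ℝ) (s : Fin m → ℝ) :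
    (Sum.elim (0 : Fin n → ℝ) (Sum.elim s (diagonal h *ᵥ s))) ⬝ᵥ
      ((fromBlocks H₁ (fromCols 0 Aᵀ) (fromRows 0 A)
        (fromBlocks (diagonal h) (-1) (-1) (-(δc • (1 : Matrix (Fin m) (Fin m) ℝ))))) *ᵥ
       (Sum.elim (0 : Fin n → ℝ) (Sum.elim s (diagonal h *ᵥ s))))
    = -(s ⬝ᵥ (diagonal h *ᵥ s)) - δc * ((diagonal h *ᵥ s) ⬝ᵥ (diagonal h *ᵥ s)) := by
  simp only [fromBlocks_mulVec, fromRows_mulVec, fromCols_mulVec_sumElim,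
    sumElim_dotProduct_sumElim, Matrix.add_mulVec, Matrix.zero_mulVec, zero_add, add_zero,
    Matrix.neg_mulVec, Matrix.one_mulVec, dotProduct_add, add_dotProduct,
    Matrix.smul_mulVec, dotProduct_neg, dotProduct_smul,
    Sum.elim_comp_inl, Sum.elim_comp_inr, dotProduct_zero, zero_dotProduct,
    Matrix.mulVec_zero, smul_eq_mul]
  have h1 : (diagonal h *ᵥ s) ⬝ᵥ s = s ⬝ᵥ (diagonal h *ᵥ s) := dotProduct_comm _ _
  linear_combination -h1

/-- Inertia of the augmented KKT matrix: if the condensed matrix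
`M_cond = H₁ + Aᵀ D A` is positive definite (with `H₁ = W + Σₓ + δ_w I`,
`H₂ = Σₛ + δ_w I`, `C = (δ_c Σₛ + (1+δ_c δ_w)I)⁻¹`, `D = H₂ C`), then
`M_aug = [[H₁, 0, Aᵀ],[0, H₂, −I],[A, −I, −δ_c I]]` has exactly `n + m` positive,
`0` zero, and `m` negative eigenvalues. -/
theorem stmt19 {n m : ℕ} (W : Matrix (Fin n) (Fin n) ℝ) (hW : W.IsSymm)
    (A : Matrix (Fin m) (Fin n) ℝ)
    (σx : Fin n → ℝ) (hσx : ∀ i, 0 < σx i)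
    (σs : Fin m → ℝ) (hσs : ∀ j, 0 < σs j)
    (δw δc : ℝ) (hδw : 0 ≤ δw) (hδc : 0 < δc)
    (C D : Matrix (Fin m) (Fin m) ℝ)
    (hC : C = (δc • Matrix.diagonal σs + (1 + δc * δw) • (1 : Matrix (Fin m) (Fin m) ℝ))⁻¹)
    (hD : D = (Matrix.diagonal σs + δw • (1 : Matrix (Fin m) (Fin m) ℝ)) * C)
    (hcond : (W + Matrix.diagonal σx + δw • (1 : Matrix (Fin n) (Fin n) ℝ)
        + Aᵀ * D * A).PosDef)
    (hM : (Matrix.fromBlocks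
        (W + Matrix.diagonal σx + δw • (1 : Matrix (Fin n) (Fin n) ℝ))
        (Matrix.fromCols (0 : Matrix (Fin n) (Fin m) ℝ) Aᵀ)
        (Matrix.fromRows (0 : Matrix (Fin m) (Fin n) ℝ) A)
        (Matrix.fromBlocks
          (Matrix.diagonal σs + δw • (1 : Matrix (Fin m) (Fin m) ℝ))
          (-(1 : Matrix (Fin m) (Fin m) ℝ))
          (-(1 : Matrix (Fin m) (Fin m) ℝ))
          (-(δc • (1 : Matrix (Fin m) (Fin m) ℝ))))).IsHermitian) :
    (Finset.univ.filter fun idx => 0 < hM.eigenvalues idx).card = n + m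
    ∧ (Finset.univ.filter fun idx => hM.eigenvalues idx = 0).card = 0
    ∧ (Finset.univ.filter fun idx => hM.eigenvalues idx < 0).card = m := by
  classical
  set H₁ := W + Matrix.diagonal σx + δw • (1 : Matrix (Fin n) (Fin n) ℝ) with hH₁
  set h : Fin m → ℝ := fun j => σs j + δw with hh'
  set e : Fin m → ℝ := fun j => δc * σs j + (1 + δc * δw) with he'
  have hh : ∀ j, 0 < h j := fun j => by have := hσs j; simp [hh']; linarith
  have hepos : ∀ j, 0 < e j := fun j => by
    have := hσs j; simp [he']; nlinarith
  have he0 : ∀ j, e j ≠ 0 := fun j => (hepos j).ne'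
  have he : ∀ j, e j = δc * h j + 1 := fun j => by simp [he', hh']; ring
  have hH2 : Matrix.diagonal σs + δw • (1 : Matrix (Fin m) (Fin m) ℝ) = diagonal h := by
    rw [Matrix.smul_one_eq_diagonal, Matrix.diagonal_add]
  have hE : δc • Matrix.diagonal σs + (1 + δc * δw) • (1 : Matrix (Fin m) (Fin m) ℝ)
      = diagonal e := by
    rw [Matrix.smul_one_eq_diagonal, ← Matrix.diagonal_smul, Matrix.diagonal_add]
    congr 1
  have hCd : C = diagonal (fun j => (e j)⁻¹) := by
    rw [hC, hE]
    apply Matrix.inv_eq_right_inv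
    rw [Matrix.diagonal_mul_diagonal,
      show (fun j => e j * (e j)⁻¹) = fun _ => (1:ℝ) from
        funext fun j => mul_inv_cancel₀ (he0 j), Matrix.diagonal_one]
  have hDd : D = diagonal (fun j => h j * (e j)⁻¹) := by
    rw [hD, hH2, hCd, Matrix.diagonal_mul_diagonal]
  -- abbreviations
  set Mat := Matrix.fromBlocks H₁
      (Matrix.fromCols (0 : Matrix (Fin n) (Fin m) ℝ) Aᵀ)
      (Matrix.fromRows (0 : Matrix (Fin m) (Fin n) ℝ) A)
      (Matrix.fromBlocks (Matrix.diagonal σs + δw • (1 : Matrix (Fin m) (Fin m) ℝ))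
        (-(1 : Matrix (Fin m) (Fin m) ℝ)) (-(1 : Matrix (Fin m) (Fin m) ℝ))
        (-(δc • (1 : Matrix (Fin m) (Fin m) ℝ)))) with hMat'
  have hMat : Mat = Matrix.fromBlocks H₁
      (Matrix.fromCols (0 : Matrix (Fin n) (Fin m) ℝ) Aᵀ)
      (Matrix.fromRows (0 : Matrix (Fin m) (Fin n) ℝ) A)
      (Matrix.fromBlocks (diagonal h)
        (-(1 : Matrix (Fin m) (Fin m) ℝ)) (-(1 : Matrix (Fin m) (Fin m) ℝ))
        (-(δc • (1 : Matrix (Fin m) (Fin m) ℝ)))) := by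
    rw [hMat', hH2]
  -- positive subspace
  have hHs_nonneg : ∀ s : Fin m → ℝ, 0 ≤ s ⬝ᵥ (diagonal h *ᵥ s) := fun s => by
    simp only [dotProduct, Matrix.mulVec_diagonal]
    exact Finset.sum_nonneg fun j _ => by nlinarith [sq_nonneg (s j), (hh j).le]
  have hHs_pos : ∀ s : Fin m → ℝ, s ≠ 0 → 0 < s ⬝ᵥ (diagonal h *ᵥ s) := fun s hs => by
    have := (Matrix.PosDef.diagonal hh).dotProduct_mulVec_pos hs
    simpa using this
  have hMcond : ∀ x : Fin n → ℝ, x ≠ 0 →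
      0 < x ⬝ᵥ ((H₁ + Aᵀ * diagonal (fun j => h j * (e j)⁻¹) * A) *ᵥ x) := fun x hx => by
    have := hcond.dotProduct_mulVec_pos hx
    rw [hDd] at this
    simpa [hH₁] using this
  have hMcond0 : ∀ x : Fin n → ℝ,
      0 ≤ x ⬝ᵥ ((H₁ + Aᵀ * diagonal (fun j => h j * (e j)⁻¹) * A) *ᵥ x) := fun x => by
    by_cases hx : x = 0
    · simp [hx]
    · exact (hMcond x hx).le
  -- the linear maps
  let fplus : ((Fin n → ℝ) × (Fin m → ℝ)) →ₗ[ℝ] EuclideanSpace ℝ (Fin n ⊕ (Fin m ⊕ Fin m)) :=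
    { toFun := fun p => WithLp.toLp 2 (Sum.elim p.1
        (Sum.elim (diagonal (fun j => (e j)⁻¹) *ᵥ (A *ᵥ p.1) + p.2)
          (diagonal (fun j => h j * (e j)⁻¹) *ᵥ (A *ᵥ p.1))))
      map_add' := fun p q => by
        ext i
        rcases i with i | j
        · simp
        · rcases j with j | j <;>
            simp [Matrix.mulVec_add] <;> ring
      map_smul' := fun a p => by
        ext i
        rcases i with i | j
        · simp
        · rcases j with j | j <;>
            simp [Matrix.mulVec_smul] <;> ring }
  let fminus : (Fin m → ℝ) →ₗ[ℝ] EuclideanSpace ℝ (Fin n ⊕ (Fin m ⊕ Fin m)) :=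
    { toFun := fun s => WithLp.toLp 2 (Sum.elim (0 : Fin n → ℝ) (Sum.elim s (diagonal h *ᵥ s)))
      map_add' := fun p q => by
        ext i
        rcases i with i | j
        · simp
        · rcases j with j | j <;> simp [Matrix.mulVec_add]
      map_smul' := fun a p => by
        ext i
        rcases i with i | j
        · simp
        · rcases j with j | j <;> simp [Matrix.mulVec_smul] }
  have hfplus_inj : Function.Injective fplus := by
    rw [← LinearMap.ker_eq_bot, Submodule.eq_bot_iff]
    rintro ⟨x, s⟩ hp
    have hp' : fplus (x, s) = 0 := hp
    have hx : x = 0 := by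
      funext i
      have := congrFun (congrArg (fun v : EuclideanSpace ℝ (Fin n ⊕ (Fin m ⊕ Fin m)) =>
        (v : (Fin n ⊕ (Fin m ⊕ Fin m)) → ℝ)) hp') (Sum.inl i)
      simpa [fplus] using this
    have hs : s = 0 := by
      funext j
      have := congrFun (congrArg (fun v : EuclideanSpace ℝ (Fin n ⊕ (Fin m ⊕ Fin m)) =>
        (v : (Fin n ⊕ (Fin m ⊕ Fin m)) → ℝ)) hp') (Sum.inr (Sum.inl j))
      simpa [fplus, hx, Matrix.mulVec_zero] using this
    simp [hx, hs, Prod.ext_iff]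
  have hfminus_inj : Function.Injective fminus := by
    rw [← LinearMap.ker_eq_bot, Submodule.eq_bot_iff]
    intro s hp
    have hp' : fminus s = 0 := hp
    funext j
    have := congrFun (congrArg (fun v : EuclideanSpace ℝ (Fin n ⊕ (Fin m ⊕ Fin m)) =>
      (v : (Fin n ⊕ (Fin m ⊕ Fin m)) → ℝ)) hp') (Sum.inr (Sum.inl j))
    simpa [fminus] using this
  -- apply the key lemma
  have k1 := inertia_key Mat hM 1 (LinearMap.range fplus) ?_
  swap
  · rintro v ⟨⟨x, s⟩, rfl⟩ hv0
    rw [one_mul]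
    have hq : (fplus (x, s) : (Fin n ⊕ (Fin m ⊕ Fin m)) → ℝ) ⬝ᵥ
        (Mat *ᵥ (fplus (x, s) : (Fin n ⊕ (Fin m ⊕ Fin m)) → ℝ))
        = x ⬝ᵥ ((H₁ + Aᵀ * diagonal (fun j => h j * (e j)⁻¹) * A) *ᵥ x)
          + s ⬝ᵥ (diagonal h *ᵥ s) := by
      rw [hMat]
      exact quad_plus H₁ A h δc e he he0 x s
    rw [hq]
    have hp0 : (x, s) ≠ (0 : (Fin n → ℝ) × (Fin m → ℝ)) := by
      intro hcontra
      apply hv0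
      rw [hcontra, map_zero]
    by_cases hx : x = 0
    · have hs : s ≠ 0 := by
        intro hs; exact hp0 (by rw [hx, hs]; rfl)
      have : x ⬝ᵥ ((H₁ + Aᵀ * diagonal (fun j => h j * (e j)⁻¹) * A) *ᵥ x) = 0 := by
        rw [hx]; simp
      rw [this, zero_add]
      exact hHs_pos s hs
    · exact add_pos_of_pos_of_nonneg (hMcond x hx) (hHs_nonneg s)
  have k2 := inertia_key Mat hM (-1) (LinearMap.range fminus) ?_
  swap
  · rintro v ⟨s, rfl⟩ hv0
    have hs : s ≠ 0 := by
      intro hcontra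
      apply hv0
      rw [hcontra, map_zero]
    have hq : (fminus s : (Fin n ⊕ (Fin m ⊕ Fin m)) → ℝ) ⬝ᵥ
        (Mat *ᵥ (fminus s : (Fin n ⊕ (Fin m ⊕ Fin m)) → ℝ))
        = -(s ⬝ᵥ (diagonal h *ᵥ s)) - δc * ((diagonal h *ᵥ s) ⬝ᵥ (diagonal h *ᵥ s)) := by
      rw [hMat]
      exact quad_minus H₁ A h δc s
    rw [hq]
    have h2 : 0 ≤ (diagonal h *ᵥ s) ⬝ᵥ (diagonal h *ᵥ s) :=
      Finset.sum_nonneg fun j _ => mul_self_nonneg _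
    have h1 := hHs_pos s hs
    nlinarith
  -- finrank computations
  have r1 : Module.finrank ℝ (LinearMap.range fplus) = n + m := by
    rw [LinearMap.finrank_range_of_inj hfplus_inj]
    simp [Module.finrank_prod, Module.finrank_fin_fun]
  have r2 : Module.finrank ℝ (LinearMap.range fminus) = m := by
    rw [LinearMap.finrank_range_of_inj hfminus_inj]
    simp [Module.finrank_fin_fun]
  rw [r1] at k1
  rw [r2] at k2
  simp only [one_mul] at k1
  simp only [neg_one_mul, neg_pos] at k2
  -- counting
  set f := hM.eigenvalues with hf
  have hpart : (Finset.univ.filter fun j => 0 < f j).card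
      + ((Finset.univ.filter fun j => f j = 0).card
      + (Finset.univ.filter fun j => f j < 0).card) = n + (m + m) := by
    have hsplit : (Finset.univ.filter fun j => ¬ 0 < f j)
        = (Finset.univ.filter fun j => f j = 0) ∪ (Finset.univ.filter fun j => f j < 0) := by
      ext j
      simp only [Finset.mem_filter, Finset.mem_union, Finset.mem_univ, true_and, not_lt]
      constructor
      · intro hle
        rcases lt_or_eq_of_le hle with hlt | heq
        · exact Or.inr hlt
        · exact Or.inl heq
      · rintro (heq | hlt)
        · exact le_of_eq heq
        · exact hlt.le
    have hdisj : Disjoint (Finset.univ.filter fun j => f j = 0)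
        (Finset.univ.filter fun j => f j < 0) := by
      rw [Finset.disjoint_filter]
      intro j _ heq
      simp [heq]
    have := Finset.card_filter_add_card_filter_not
      (s := (Finset.univ : Finset (Fin n ⊕ (Fin m ⊕ Fin m)))) (p := fun j => 0 < f j)
    rw [hsplit, Finset.card_union_of_disjoint hdisj] at this
    simpa using this
  refine ⟨by omega, by omega, by omega⟩
end
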